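/- arXiv:1707.09670 — 4 statements merged into one kernel-verified Lean document; each statement's English description precedes it below -/
import Mathlib

section
/- Let V be a set with exactly 3 elements. There is no simple graph G on vertex set V such that the family of nonempty subsets of closed neighborhoods of vertices of G equals the family of all nonempty proper subsets of V. (Equivalently: the boundary of a triangle is not the neighborhood complex of any graph.) -/
/-- The closed neighborhood of a vertex `v` in a simple graph `G`. -/
def closedNbhd {V : Type*} (G : SimpleGraph V) (v : V) : Set V :=
  insert v (G.neighborSet v)

/-!
Every closed neighborhood is a face, so none of them is all of `V`. Every pair `{a, b}` is a
face, so it lies in some `N[v]`; if `v` were different from `a` and `b`, then `N[v]` would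
contain three distinct vertices and be all of `V`. Hence `v ∈ {a, b}` and `a`, `b` are adjacent.
So `G` is complete, and then every closed neighborhood is `V`, a contradiction.
-/

section

variable {V : Type*}

lemma Set.pair_ne_univ (hV : 2 < Nat.card V) (a b : V) : ({a, b} : Set V) ≠ Set.univ := by
  intro h
  have hle : ({a, b} : Set V).ncard ≤ 2 :=
    (Set.ncard_insert_le a {b}).trans_eq (by rw [Set.ncard_singleton])
  rw [h, Set.ncard_univ] at hle
  omega

lemma Set.eq_univ_of_three_mem [Finite V] (hV : Nat.card V = 3) {s : Set V} {a b c : V}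
    (hab : a ≠ b) (hac : a ≠ c) (hbc : b ≠ c) (ha : a ∈ s) (hb : b ∈ s) (hc : c ∈ s) :
    s = Set.univ := by
  have habc : ({a, b, c} : Set V) = Set.univ :=
    Set.eq_of_subset_of_ncard_le (Set.subset_univ _)
      (by rw [Set.ncard_univ, hV, Set.ncard_eq_three.mpr ⟨a, b, c, hab, hac, hbc, rfl⟩])
      (Set.toFinite _)
  exact Set.eq_univ_of_univ_subset (habc ▸ Set.insert_subset ha (Set.insert_subset hb
    (Set.singleton_subset_iff.mpr hc)))

variable {G : SimpleGraph V} {u v : V}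

lemma mem_closedNbhd_iff : u ∈ closedNbhd G v ↔ u = v ∨ G.Adj v u := Iff.rfl

lemma self_mem_closedNbhd : v ∈ closedNbhd G v := Set.mem_insert v _

lemma closedNbhd_eq_univ_of_adj (h : ∀ u, u ≠ v → G.Adj v u) : closedNbhd G v = Set.univ :=
  Set.eq_univ_of_forall fun u => (eq_or_ne u v).imp_right (h u)

lemma adj_of_mem_closedNbhd_of_ne_univ [Finite V] (hV : Nat.card V = 3)
    (hv : closedNbhd G v ≠ Set.univ) {a b : V} (hab : a ≠ b)
    (ha : a ∈ closedNbhd G v) (hb : b ∈ closedNbhd G v) : G.Adj a b := by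
  rcases eq_or_ne v a with rfl | hva
  · exact (mem_closedNbhd_iff.mp hb).resolve_left hab.symm
  rcases eq_or_ne v b with rfl | hvb
  · exact ((mem_closedNbhd_iff.mp ha).resolve_left hab).symm
  exact absurd (Set.eq_univ_of_three_mem hV hva hvb hab self_mem_closedNbhd ha hb) hv

end

/-- Let `V` have exactly 3 elements.  There is no simple graph `G` on `V` whose
neighborhood complex (the family of nonempty subsets of closed neighborhoods of
vertices) equals the family of all nonempty proper subsets of `V`: the boundary of a
triangle is not the neighborhood complex of any graph. -/
theorem boundary_triangle_not_neighborhood_complex {V : Type*} [Fintype V]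
    (hV : Fintype.card V = 3) :
    ¬ ∃ G : SimpleGraph V,
        ∀ s : Set V,
          (s.Nonempty ∧ ∃ v : V, s ⊆ closedNbhd G v) ↔ (s.Nonempty ∧ s ≠ Set.univ) := by
  rintro ⟨G, h⟩
  have hV' : Nat.card V = 3 := by rwa [Nat.card_eq_fintype_card]
  have hproper : ∀ v, closedNbhd G v ≠ Set.univ := fun v =>
    ((h _).mp ⟨⟨v, self_mem_closedNbhd⟩, v, subset_rfl⟩).2
  have hcomplete : ∀ a b, a ≠ b → G.Adj a b := by
    intro a b hab
    obtain ⟨-, v, hv⟩ :=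
      (h {a, b}).mpr ⟨Set.insert_nonempty _ _, Set.pair_ne_univ (by omega) a b⟩
    exact adj_of_mem_closedNbhd_of_ne_univ hV' (hproper v) hab (hv (by simp)) (hv (by simp))
  obtain ⟨v⟩ : Nonempty V := Fintype.card_pos_iff.mp (by omega)
  exact hproper v (closedNbhd_eq_univ_of_adj fun u hu => hcomplete v u hu.symm)
end

section
/- Let G be a simple graph on a vertex set V and let x, y be two distinct elements not in V. Define the graph ElSusp(G) on vertex set V ∪ {x, y} whose edges are the edges of G together with the single extra edge ⟨x, y⟩. Then a nonempty subset Y of V ∪ {x, y} is enclaveless in ElSusp(G) if and only if Y does not contain both x and y, and Y ∩ V is either empty or enclaveless in G. (This realizes the suspension: El(ElSusp(G)) is the suspension of El(G) with apexes x and y.) -/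
/-- A set `Y` of vertices is enclaveless if no `v ∈ Y` has its whole closed neighborhood
contained in `Y`. -/
def Enclaveless {V : Type*} (G : SimpleGraph V) (Y : Set V) : Prop :=
  ¬ ∃ v ∈ Y, closedNbhd G v ⊆ Y

/-- The graph `ElSusp(G)`: two new vertices `x = Sum.inr 0` and `y = Sum.inr 1` are
added to `G`, joined to each other by a single extra edge and to nothing else. -/
def ElSusp {V : Type*} (G : SimpleGraph V) : SimpleGraph (V ⊕ Fin 2) where
  Adj a b :=
    match a, b with
    | Sum.inl u, Sum.inl v => G.Adj u v
    | Sum.inl _, Sum.inr _ => False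
    | Sum.inr _, Sum.inl _ => False
    | Sum.inr i, Sum.inr j => i ≠ j
  symm := by
    refine ⟨?_⟩
    rintro (u | i) (v | j) h
    · exact G.symm.symm _ _ h
    · exact h.elim
    · exact h.elim
    · exact Ne.symm h
  loopless := by
    refine ⟨?_⟩
    rintro (u | i) h
    · exact G.loopless.irrefl u h
    · exact h rfl

open Set SimpleGraph

theorem ElSusp_eq_sum_top {V : Type*} (G : SimpleGraph V) : ElSusp G = G ⊕g ⊤ := by
  ext (u | i) (v | j) <;> simp [ElSusp]

section

variable {V W : Type*}

theorem enclaveless_empty (G : SimpleGraph V) : Enclaveless G ∅ := by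
  simp [Enclaveless]

theorem closedNbhd_sum_inl (G : SimpleGraph V) (H : SimpleGraph W) (v : V) :
    closedNbhd (G ⊕g H) (.inl v) = .inl '' closedNbhd G v := by
  ext (u | w) <;> simp [closedNbhd, eq_comm]

theorem closedNbhd_sum_inr (G : SimpleGraph V) (H : SimpleGraph W) (w : W) :
    closedNbhd (G ⊕g H) (.inr w) = .inr '' closedNbhd H w := by
  ext (v | u) <;> simp [closedNbhd, eq_comm]

theorem enclaveless_sum_iff (G : SimpleGraph V) (H : SimpleGraph W) (Y : Set (V ⊕ W)) :
    Enclaveless (G ⊕g H) Y ↔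
      Enclaveless G (.inl ⁻¹' Y) ∧ Enclaveless H (.inr ⁻¹' Y) := by
  simp only [Enclaveless, Sum.exists, closedNbhd_sum_inl, closedNbhd_sum_inr, image_subset_iff,
    mem_preimage, not_or]

theorem closedNbhd_top (v : V) : closedNbhd ⊤ v = univ := by
  simp [closedNbhd, eq_univ_iff_forall, em]

theorem enclaveless_top_iff [Nonempty V] (Z : Set V) :
    Enclaveless (⊤ : SimpleGraph V) Z ↔ Z ≠ univ := by
  simp only [Enclaveless, closedNbhd_top, univ_subset_iff, ne_eq]
  exact ⟨fun h hZ => h ⟨Classical.arbitrary V, hZ ▸ mem_univ _, hZ⟩,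
    fun h ⟨_, _, hZ⟩ => h hZ⟩

end

theorem enclaveless_ElSusp_iff_general {V : Type*} (G : SimpleGraph V) (Y : Set (V ⊕ Fin 2)) :
    Enclaveless (ElSusp G) Y ↔
      (¬ (Sum.inr 0 ∈ Y ∧ Sum.inr 1 ∈ Y) ∧
        (Sum.inl ⁻¹' Y = ∅ ∨ Enclaveless G (Sum.inl ⁻¹' Y))) := by
  have hApexes : Sum.inr ⁻¹' Y = univ ↔ Sum.inr 0 ∈ Y ∧ Sum.inr 1 ∈ Y := by
    simp [eq_univ_iff_forall, Fin.forall_fin_two]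
  have hTrace : Sum.inl ⁻¹' Y = ∅ ∨ Enclaveless G (Sum.inl ⁻¹' Y) ↔
      Enclaveless G (Sum.inl ⁻¹' Y) :=
    ⟨fun h => h.elim (fun hY => hY ▸ enclaveless_empty G) id, Or.inr⟩
  rw [ElSusp_eq_sum_top, enclaveless_sum_iff, enclaveless_top_iff, ne_eq, hApexes, hTrace,
    and_comm]

/-- A nonempty subset `Y` of `V ∪ {x, y}` is enclaveless in `ElSusp(G)` if and only if
`Y` does not contain both `x` and `y`, and `Y ∩ V` is empty or enclaveless in `G`.
(This realizes the suspension: `El(ElSusp(G))` is the suspension of `El(G)` with apexes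
`x` and `y`.) -/
theorem enclaveless_ElSusp_iff {V : Type*} (G : SimpleGraph V) (Y : Set (V ⊕ Fin 2))
    (hY : Y.Nonempty) :
    Enclaveless (ElSusp G) Y ↔
      (¬ (Sum.inr 0 ∈ Y ∧ Sum.inr 1 ∈ Y) ∧
        (Sum.inl ⁻¹' Y = ∅ ∨ Enclaveless G (Sum.inl ⁻¹' Y))) :=
  enclaveless_ElSusp_iff_general G Y
end

section
/- Let (G, f) be a weighted graph with finitely many vertices. For t ∈ ℝ let G_t be the spanning subgraph of G whose edges are those edges e of G with f(e) ≤ t. Define f_El on simplices of El(G) by: for a singleton {v}, f_El({v}) is the minimum of f over the edges of G incident to v; for a simplex σ with at least 2 vertices, f_El(σ) is the infimum of the set {t ∈ ℝ : σ is contained in some enclaveless set of G_t}. Then f_El is monotone: for all simplices σ ⊆ τ of El(G), f_El(σ) ≤ f_El(τ). Hence (El(G), f_El) is a filtered simplicial complex. -/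
/-- The spanning subgraph `G_t` of a weighted graph `(G, f)` whose edges are the edges
`e` of `G` with `f e ≤ t`. -/
def sublevelGraph {V : Type*} (G : SimpleGraph V) (f : Sym2 V → ℝ) (t : ℝ) :
    SimpleGraph V where
  Adj u v := G.Adj u v ∧ f s(u, v) ≤ t
  symm := by
    constructor
    intro u v ⟨h, hf⟩
    exact ⟨h.symm, by rwa [Sym2.eq_swap]⟩
  loopless := by
    constructor
    intro v ⟨h, _⟩
    exact G.loopless.irrefl v h

/-- The filtering function `f_El` on the complex of enclaveless sets: on a singleton
`{v}` it is the minimum (infimum) of `f` over the edges of `G` incident to `v`; on a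
simplex with at least 2 vertices it is the infimum of the `t` such that the simplex is
contained in some enclaveless set of the sublevel graph `G_t`. -/
noncomputable def fEl {V : Type*} (G : SimpleGraph V) (f : Sym2 V → ℝ) (σ : Finset V) :
    ℝ :=
  if σ.card ≤ 1 then sInf {r : ℝ | ∃ e ∈ G.edgeSet, ∃ v ∈ σ, v ∈ e ∧ r = f e}
  else sInf {t : ℝ | ∃ Y : Set V, Enclaveless (sublevelGraph G f t) Y ∧ (σ : Set V) ⊆ Y}

/-
Thresholds are antitone: a set witnessing `t` for `τ` also witnesses it for `σ ⊆ τ`. Every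
vertex of an enclaveless set of `G_t` has an edge of weight `≤ t` leaving the set, so each
threshold for `τ` dominates a weight at a vertex of `σ`, which settles the singleton case.
Since `G` is finite, the thresholds are bounded below by these weights and contain any `t`
above all edge weights (there `G_t = G`, in which `τ` is enclaveless), so the infima behave.
-/

section

variable {V : Type*} {G : SimpleGraph V} {f : Sym2 V → ℝ}

theorem Enclaveless.exists_adj_notMem {Y : Set V} (hY : Enclaveless G Y) {v : V}
    (hv : v ∈ Y) : ∃ u, G.Adj v u ∧ u ∉ Y := by
  by_contra! h
  exact hY ⟨v, hv, Set.insert_subset hv h⟩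

theorem Enclaveless.exists_incident_weight_le {t : ℝ} {Y : Set V}
    (hY : Enclaveless (sublevelGraph G f t) Y) {v : V} (hv : v ∈ Y) :
    ∃ e ∈ G.edgeSet, v ∈ e ∧ f e ≤ t := by
  obtain ⟨u, ⟨hadj, hft⟩, -⟩ := hY.exists_adj_notMem hv
  exact ⟨s(v, u), hadj, Sym2.mem_mk_left v u, hft⟩

theorem sublevelGraph_eq_self {t : ℝ} (ht : ∀ e ∈ G.edgeSet, f e ≤ t) :
    sublevelGraph G f t = G := by
  ext u v
  exact ⟨And.left, fun h => ⟨h, ht _ h⟩⟩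

variable (G f)

def incidentWeights (σ : Finset V) : Set ℝ :=
  {r : ℝ | ∃ e ∈ G.edgeSet, ∃ v ∈ σ, v ∈ e ∧ r = f e}

def enclavelessThresholds (σ : Finset V) : Set ℝ :=
  {t : ℝ | ∃ Y : Set V, Enclaveless (sublevelGraph G f t) Y ∧ (σ : Set V) ⊆ Y}

theorem fEl_of_card_le_one {σ : Finset V} (h : σ.card ≤ 1) :
    fEl G f σ = sInf (incidentWeights G f σ) :=
  if_pos h

theorem fEl_of_one_lt_card {σ : Finset V} (h : 1 < σ.card) :
    fEl G f σ = sInf (enclavelessThresholds G f σ) :=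
  if_neg h.not_ge

variable {G f}

theorem enclavelessThresholds_anti {σ τ : Finset V} (hστ : σ ⊆ τ) :
    enclavelessThresholds G f τ ⊆ enclavelessThresholds G f σ := by
  rintro t ⟨Y, hY, hτY⟩
  exact ⟨Y, hY, (Finset.coe_subset.mpr hστ).trans hτY⟩

variable [Fintype V]

theorem enclavelessThresholds_nonempty {τ : Finset V} (hτ : Enclaveless G (τ : Set V)) :
    (enclavelessThresholds G f τ).Nonempty := by
  obtain ⟨t, ht⟩ := ((Set.toFinite G.edgeSet).image f).bddAbove
  refine ⟨t, τ, ?_, subset_rfl⟩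
  rwa [sublevelGraph_eq_self fun e he => ht ⟨e, he, rfl⟩]

theorem bddBelow_incidentWeights (σ : Finset V) : BddBelow (incidentWeights G f σ) :=
  ((Set.toFinite G.edgeSet).image f).bddBelow.mono <| by
    rintro r ⟨e, he, -, -, -, rfl⟩
    exact ⟨e, he, rfl⟩

theorem sInf_incidentWeights_le {σ : Finset V} (hσ : σ.Nonempty) {t : ℝ}
    (ht : t ∈ enclavelessThresholds G f σ) : sInf (incidentWeights G f σ) ≤ t := by
  obtain ⟨v, hv⟩ := hσ
  obtain ⟨Y, hY, hσY⟩ := ht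
  obtain ⟨e, he, hve, hft⟩ := hY.exists_incident_weight_le (hσY hv)
  exact (csInf_le (bddBelow_incidentWeights σ) ⟨e, he, v, hv, hve, rfl⟩).trans hft

theorem bddBelow_enclavelessThresholds {σ : Finset V} (hσ : σ.Nonempty) :
    BddBelow (enclavelessThresholds G f σ) :=
  ⟨_, fun _ => sInf_incidentWeights_le hσ⟩

end

/-- For a finite weighted graph `(G, f)`, the function `f_El` is monotone on the
simplices of the complex `El(G)` of enclaveless sets: if `σ ⊆ τ` are simplices of
`El(G)` (nonempty enclaveless sets of `G`), then `f_El σ ≤ f_El τ`.  Hence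
`(El(G), f_El)` is a filtered simplicial complex. -/
theorem fEl_monotone {V : Type*} [Fintype V] (G : SimpleGraph V) (f : Sym2 V → ℝ)
    (σ τ : Finset V)
    (hσ : σ.Nonempty ∧ Enclaveless G (σ : Set V))
    (hτ : τ.Nonempty ∧ Enclaveless G (τ : Set V))
    (hστ : σ ⊆ τ) :
    fEl G f σ ≤ fEl G f τ := by
  by_cases hτ1 : τ.card ≤ 1
  · have hσ_card : 1 ≤ σ.card := Finset.card_pos.mpr hσ.1
    rw [Finset.eq_of_subset_of_card_le hστ (hτ1.trans hσ_card)]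
  rw [fEl_of_one_lt_card G f (not_le.mp hτ1)]
  by_cases hσ1 : σ.card ≤ 1
  · rw [fEl_of_card_le_one G f hσ1]
    exact le_csInf (enclavelessThresholds_nonempty hτ.2) fun t ht =>
      sInf_incidentWeights_le hσ.1 (enclavelessThresholds_anti hστ ht)
  · rw [fEl_of_one_lt_card G f (not_le.mp hσ1)]
    exact csInf_le_csInf (bddBelow_enclavelessThresholds hσ.1)
      (enclavelessThresholds_nonempty hτ.2) (enclavelessThresholds_anti hστ)
end

section
/- Let (G, f) and (G′, f′) be weighted graphs with finitely many vertices, each with at least one edge, and let ψ be a graph isomorphism from G to G′ (a bijection of the vertex sets such that u and v are adjacent in G if and only if ψ(u) and ψ(v) are adjacent in G′). Then for every clique σ of G with at least 2 vertices, |f_Cl(σ) − f′_Cl(ψ(σ))| ≤ max over the edges e of G of |f(e) − f′(ψ(e))|, and for every vertex v of G, |f_Cl(⟨v⟩) − f′_Cl(⟨ψ(v)⟩)| ≤ max over the edges e of G of |f(e) − f′(ψ(e))|. (Hence the natural pseudodistance between the filtered clique complexes is bounded above by the natural pseudodistance between the weighted graphs.) -/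
/-!
Through `ψ`, both values in each estimate are the supremum (for a clique) or the infimum (for a
vertex) of two functions over one and the same finite index set: the ordered pairs of distinct
vertices of `σ`, respectively the edges of `G` at `v`. Suprema and infima over a finite set move
by at most the largest pointwise difference, and every pointwise difference is some
`|f e - f' (ψ e)|` with `e` an edge of `G`.
-/

open SimpleGraph

theorem abs_sSup_image_sub_sSup_image_le {ι : Type*} {A : Set ι} (hA : A.Finite)
    {g h : ι → ℝ} {D : ℝ} (hD : 0 ≤ D) (hgh : ∀ a ∈ A, |g a - h a| ≤ D) :
    |sSup (g '' A) - sSup (h '' A)| ≤ D := by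
  rcases A.eq_empty_or_nonempty with rfl | hne
  · simpa using hD
  have one_side : ∀ g h : ι → ℝ, (∀ a ∈ A, g a ≤ h a + D) → sSup (g '' A) ≤ sSup (h '' A) + D :=
    fun g h hle => csSup_le (hne.image g) <| Set.forall_mem_image.2 fun a ha =>
      (hle a ha).trans <| by gcongr; exact le_csSup (hA.image h).bddAbove ⟨a, ha, rfl⟩
  rw [abs_sub_le_iff, sub_le_iff_le_add', sub_le_iff_le_add']
  exact ⟨one_side g h fun a ha => by linarith [abs_le.1 (hgh a ha)],
    one_side h g fun a ha => by linarith [abs_le.1 (hgh a ha)]⟩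

theorem abs_sInf_image_sub_sInf_image_le {ι : Type*} {A : Set ι} (hA : A.Finite)
    {g h : ι → ℝ} {D : ℝ} (hD : 0 ≤ D) (hgh : ∀ a ∈ A, |g a - h a| ≤ D) :
    |sInf (g '' A) - sInf (h '' A)| ≤ D := by
  have neg_image : ∀ k : ι → ℝ, -(k '' A) = (-k) '' A := fun k => by
    rw [← Set.image_neg_eq_neg, Set.image_image]; rfl
  rw [Real.sInf_def, Real.sInf_def, neg_image, neg_image, neg_sub_neg, abs_sub_comm]
  exact abs_sSup_image_sub_sSup_image_le hA hD fun a ha => by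
    simpa [abs_sub_comm, neg_add_eq_sub] using hgh a ha

namespace SimpleGraph.Iso

variable {V V' : Type*} {G : SimpleGraph V} {G' : SimpleGraph V'}

theorem preimage_incidenceSet (ψ : G ≃g G') (v : V) :
    Sym2.map ψ ⁻¹' G'.incidenceSet (ψ v) = G.incidenceSet v := by
  ext e
  simp [incidenceSet, ψ.map_mem_edgeSet_iff, Sym2.mem_map, ψ.injective.eq_iff]

theorem image_incidenceSet (ψ : G ≃g G') (v : V) :
    Sym2.map ψ '' G.incidenceSet v = G'.incidenceSet (ψ v) := by
  have left_inv : ∀ e : Sym2 V, Sym2.map ψ.symm (Sym2.map ψ e) = e := fun e => by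
    simp [Sym2.map_map]
  have right_inv : ∀ e : Sym2 V', Sym2.map ψ (Sym2.map ψ.symm e) = e := fun e => by
    simp [Sym2.map_map]
  rw [Set.image_eq_preimage_of_inverse left_inv right_inv, ← ψ.symm.preimage_incidenceSet,
    ψ.symm_apply_apply]

end SimpleGraph.Iso

theorem fCl_iso_stability_general {V V' : Type*} [Fintype V] [DecidableEq V']
    (G : SimpleGraph V) (G' : SimpleGraph V')
    (f : Sym2 V → ℝ) (f' : Sym2 V' → ℝ)
    (ψ : G ≃g G') :
    (∀ σ : Finset V, G.IsClique (σ : Set V) → 2 ≤ σ.card →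
      |sSup {r : ℝ | ∃ u ∈ σ, ∃ v ∈ σ, u ≠ v ∧ r = f s(u, v)} -
          sSup {r : ℝ | ∃ u ∈ σ.image ψ, ∃ v ∈ σ.image ψ, u ≠ v ∧ r = f' s(u, v)}| ≤
        sSup {d : ℝ | ∃ e ∈ G.edgeSet, d = |f e - f' (Sym2.map ψ e)|}) ∧
    (∀ v : V,
      |sInf {r : ℝ | ∃ e ∈ G.edgeSet, v ∈ e ∧ r = f e} -
          sInf {r : ℝ | ∃ e ∈ G'.edgeSet, ψ v ∈ e ∧ r = f' e}| ≤
        sSup {d : ℝ | ∃ e ∈ G.edgeSet, d = |f e - f' (Sym2.map ψ e)|}) := by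
  set δ : Sym2 V → ℝ := fun e => |f e - f' (Sym2.map ψ e)|
  rw [show {d : ℝ | ∃ e ∈ G.edgeSet, d = δ e} = δ '' G.edgeSet by ext; simp [eq_comm]]
  have hD_nonneg : 0 ≤ sSup (δ '' G.edgeSet) :=
    Real.sSup_nonneg (Set.forall_mem_image.2 fun _ _ => abs_nonneg _)
  have le_D : ∀ e ∈ G.edgeSet, δ e ≤ sSup (δ '' G.edgeSet) := fun e he =>
    le_csSup (G.edgeSet.toFinite.image δ).bddAbove ⟨e, he, rfl⟩
  refine ⟨fun σ hσ _ => ?_, fun v => ?_⟩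
  · have hS : {r | ∃ u ∈ σ, ∃ v ∈ σ, u ≠ v ∧ r = f s(u, v)} =
        (fun p => f s(p.1, p.2)) '' (σ : Set V).offDiag := by
      ext; simp [eq_comm, and_assoc]
    have hT : {r | ∃ u ∈ σ.image ψ, ∃ v ∈ σ.image ψ, u ≠ v ∧ r = f' s(u, v)} =
        (fun p => f' s(ψ p.1, ψ p.2)) '' (σ : Set V).offDiag := by
      ext; simp [eq_comm, and_assoc]
    rw [hS, hT]
    exact abs_sSup_image_sub_sSup_image_le (σ : Set V).offDiag.toFinite hD_nonneg
      fun p ⟨hu, hv, huv⟩ => le_D _ (hσ hu hv huv)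
  · have hS : {r | ∃ e ∈ G.edgeSet, v ∈ e ∧ r = f e} = f '' G.incidenceSet v := by
      ext; simp [incidenceSet, eq_comm, and_assoc]
    have hT : {r | ∃ e ∈ G'.edgeSet, ψ v ∈ e ∧ r = f' e} =
        (fun e => f' (Sym2.map ψ e)) '' G.incidenceSet v := by
      rw [← Set.image_image, ψ.image_incidenceSet]
      ext; simp [incidenceSet, eq_comm, and_assoc]
    rw [hS, hT]
    exact abs_sInf_image_sub_sInf_image_le (G.incidenceSet v).toFinite hD_nonneg
      fun e he => le_D e he.1

/-- Let `(G, f)` and `(G′, f′)` be finite weighted graphs, each with at least one edge,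
and let `ψ : G ≃g G′` be a graph isomorphism.  Then for every clique `σ` of `G` with at
least 2 vertices, `|f_Cl(σ) − f′_Cl(ψ(σ))|` is bounded by the maximum over the edges `e`
of `G` of `|f(e) − f′(ψ(e))|`, and the same bound holds for `|f_Cl(⟨v⟩) − f′_Cl(⟨ψ(v)⟩)|`
for every vertex `v`.  (Hence the natural pseudodistance between the filtered clique
complexes is bounded above by the natural pseudodistance between the weighted graphs.)
Here maxima and minima over the relevant finite nonempty sets of reals are expressed via
`sSup` and `sInf`. -/
theorem fCl_iso_stability {V V' : Type*} [Fintype V] [Fintype V'] [DecidableEq V']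
    (G : SimpleGraph V) (G' : SimpleGraph V')
    (f : Sym2 V → ℝ) (f' : Sym2 V' → ℝ)
    (hG : G.edgeSet.Nonempty) (hG' : G'.edgeSet.Nonempty)
    (ψ : G ≃g G') :
    (∀ σ : Finset V, G.IsClique (σ : Set V) → 2 ≤ σ.card →
      |sSup {r : ℝ | ∃ u ∈ σ, ∃ v ∈ σ, u ≠ v ∧ r = f s(u, v)} -
          sSup {r : ℝ | ∃ u ∈ σ.image ψ, ∃ v ∈ σ.image ψ, u ≠ v ∧ r = f' s(u, v)}| ≤
        sSup {d : ℝ | ∃ e ∈ G.edgeSet, d = |f e - f' (Sym2.map ψ e)|}) ∧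
    (∀ v : V,
      |sInf {r : ℝ | ∃ e ∈ G.edgeSet, v ∈ e ∧ r = f e} -
          sInf {r : ℝ | ∃ e ∈ G'.edgeSet, ψ v ∈ e ∧ r = f' e}| ≤
        sSup {d : ℝ | ∃ e ∈ G.edgeSet, d = |f e - f' (Sym2.map ψ e)|}) :=
  fCl_iso_stability_general G G' f f' ψ
end
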